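/- Under the hypotheses of the evasion theorem (X_n ∈ {0,1} adapted, p_n = E[X_n | ℱ_{n−1}]), suppose additionally that the attacker's tokens are classified into a proxy set Ĝ and a true green set G, and that (1/N)Σ_{n=1}^N Pr[token n ∈ G \ Ĝ | ℱ_{n−1}] ≤ ε and (1/N)Σ_{n=1}^N E[1{token n ∈ Ĝ} | ℱ_{n−1}] ≤ (p_τ − ε) − δ for some δ > 0. Then the average conditional probability of a green token satisfies (1/N)Σ_{n=1}^N E[1{token n ∈ G} | ℱ_{n−1}] ≤ p_τ − δ, and consequently Pr[(1/N)Σ 1{token n ∈ G} ≥ p_τ] ≤ exp(−N·δ²/2). -/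

import Mathlib

open MeasureTheory Finset

lemma exp_mul_le_aux (t x : ℝ) (hx : |x| ≤ 1) :
    Real.exp (t * x) ≤ Real.cosh t + x * Real.sinh t := by
  obtain ⟨h1, h2⟩ := abs_le.1 hx
  have ha : (0:ℝ) ≤ (1+x)/2 := by linarith
  have hb : (0:ℝ) ≤ (1-x)/2 := by linarith
  have hab : (1+x)/2 + (1-x)/2 = 1 := by ring
  have hc := convexOn_exp.2 (Set.mem_univ t) (Set.mem_univ (-t)) ha hb hab
  simp only [smul_eq_mul] at hc
  have harg : (1+x)/2 * t + (1-x)/2 * (-t) = t * x := by ring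
  rw [harg] at hc
  rw [Real.cosh_eq, Real.sinh_eq]
  have : (1+x)/2 * Real.exp t + (1-x)/2 * Real.exp (-t)
      = (Real.exp t + Real.exp (-t))/2 + x * ((Real.exp t - Real.exp (-t))/2) := by ring
  linarith [this ▸ hc]

lemma integrable_exp_sum_aux {Ω : Type*} {m0 : MeasurableSpace Ω} (μ : Measure Ω)
    [IsProbabilityMeasure μ] (t : ℝ) (N : ℕ) (e : ℕ → Ω → ℝ)
    (hmeas : ∀ n, Measurable (e n)) (hbd : ∀ n, ∀ᵐ ω ∂μ, |e n ω| ≤ 1) :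
    Integrable (fun ω => Real.exp (t * ∑ k ∈ range N, e k ω)) μ := by
  have hba : ∀ᵐ ω ∂μ, ∀ k ∈ range N, |e k ω| ≤ 1 :=
    (ae_ball_iff (range N).countable_toSet).2 fun k _ => hbd k
  refine Integrable.mono' (integrable_const (Real.exp (|t| * N)))
    (((Finset.measurable_sum _ fun k _ => hmeas k).const_mul t).exp.aestronglyMeasurable) ?_
  filter_upwards [hba] with ω h
  rw [Real.norm_eq_abs, Real.abs_exp, Real.exp_le_exp]
  have hS : |∑ k ∈ range N, e k ω| ≤ N := by
    calc |∑ k ∈ range N, e k ω| ≤ ∑ k ∈ range N, |e k ω| := Finset.abs_sum_le_sum_abs _ _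
    _ ≤ ∑ _k ∈ range N, (1:ℝ) := Finset.sum_le_sum h
    _ = N := by simp
  calc t * ∑ k ∈ range N, e k ω ≤ |t * ∑ k ∈ range N, e k ω| := le_abs_self _
  _ = |t| * |∑ k ∈ range N, e k ω| := abs_mul _ _
  _ ≤ |t| * N := mul_le_mul_of_nonneg_left hS (abs_nonneg t)

lemma mgf_bound_aux {Ω : Type*} {m0 : MeasurableSpace Ω} (μ : Measure Ω)
    [IsProbabilityMeasure μ] (ℱ : Filtration ℕ m0) (e : ℕ → Ω → ℝ)
    (hmeas : ∀ n, Measurable[ℱ (n+1)] (e n))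
    (hbd : ∀ n, ∀ᵐ ω ∂μ, |e n ω| ≤ 1)
    (hcond : ∀ n, μ[e n | ℱ n] =ᵐ[μ] 0)
    (t : ℝ) (N : ℕ) :
    ∫ ω, Real.exp (t * ∑ k ∈ range N, e k ω) ∂μ ≤ Real.exp (N * t^2 / 2) := by
  have hmeas0 : ∀ n, Measurable (e n) := fun n => (hmeas n).mono (ℱ.le (n+1)) le_rfl
  have heint : ∀ n, Integrable (e n) μ := by
    intro n
    refine Integrable.mono' (integrable_const 1) (hmeas0 n).aestronglyMeasurable ?_
    filter_upwards [hbd n] with ω h using by rwa [Real.norm_eq_abs]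
  induction N with
  | zero => simp
  | succ N ih =>
    set S : Ω → ℝ := fun ω => ∑ k ∈ range N, e k ω with hS
    have hSmeas : Measurable[ℱ N] S :=
      Finset.measurable_sum _ fun k hk => (hmeas k).mono (ℱ.mono (mem_range.1 hk)) le_rfl
    set f : Ω → ℝ := fun ω => Real.exp (t * S ω) with hf
    set g : Ω → ℝ := fun ω => Real.exp (t * e N ω) with hg
    have hfmeasF : StronglyMeasurable[ℱ N] f :=
      ((hSmeas.const_mul t).exp).stronglyMeasurable
    have hf_int : Integrable f μ := integrable_exp_sum_aux μ t N e hmeas0 hbd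
    have hfg_eq : (f * g) = fun ω => Real.exp (t * ∑ k ∈ range (N+1), e k ω) := by
      funext ω
      simp only [Pi.mul_apply, hf, hg, hS, Finset.sum_range_succ, mul_add, Real.exp_add]
    have hfg_int : Integrable (f * g) μ := by
      rw [hfg_eq]; exact integrable_exp_sum_aux μ t (N+1) e hmeas0 hbd
    have hg_int : Integrable g μ := by
      refine Integrable.mono' (integrable_const (Real.exp |t|))
        (((hmeas0 N).const_mul t).exp.aestronglyMeasurable) ?_
      filter_upwards [hbd N] with ω h
      rw [Real.norm_eq_abs, Real.abs_exp, Real.exp_le_exp]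
      calc t * e N ω ≤ |t * e N ω| := le_abs_self _
      _ = |t| * |e N ω| := abs_mul _ _
      _ ≤ |t| * 1 := mul_le_mul_of_nonneg_left h (abs_nonneg t)
      _ = |t| := mul_one _
    have hlin_int : Integrable ((fun _ => Real.cosh t) + Real.sinh t • e N) μ :=
      (integrable_const (Real.cosh t)).add ((heint N).smul _)
    have hgle : g ≤ᵐ[μ] (fun _ => Real.cosh t) + Real.sinh t • e N := by
      filter_upwards [hbd N] with ω h
      have := exp_mul_le_aux t (e N ω) h
      simpa [mul_comm, Pi.add_apply, Pi.smul_apply, smul_eq_mul] using this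
    have hcondg_le : μ[g | ℱ N] ≤ᵐ[μ] fun _ => Real.cosh t := by
      have h1 := condExp_mono (m := ℱ N) hg_int hlin_int hgle
      have h2 : μ[((fun _ => Real.cosh t) + Real.sinh t • e N) | ℱ N]
          =ᵐ[μ] fun _ => Real.cosh t := by
        refine (condExp_add (m := ℱ N) (integrable_const _) ((heint N).smul _)).trans ?_
        have h3 := condExp_smul (μ := μ) (m := ℱ N) (Real.sinh t) (e N)
        have h4 : (Real.sinh t) • μ[e N | ℱ N] =ᵐ[μ] 0 := by
          filter_upwards [hcond N] with ω h
          simp [Pi.smul_apply, h]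
        rw [condExp_const (ℱ.le N)]
        filter_upwards [h3, h4] with ω h3ω h4ω
        simp only [Pi.add_apply] at *
        rw [h3ω, h4ω]; simp
      exact h1.trans h2.le
    have hcondg_nonneg : 0 ≤ᵐ[μ] μ[g | ℱ N] :=
      condExp_nonneg (ae_of_all _ fun ω => (Real.exp_pos _).le)
    have hint1 : Integrable (fun ω => f ω * (μ[g | ℱ N]) ω) μ := by
      simp_rw [mul_comm]
      refine hf_int.bdd_mul (c := Real.cosh t)
        ((stronglyMeasurable_condExp.mono (ℱ.le N)).aestronglyMeasurable) ?_
      filter_upwards [hcondg_le, hcondg_nonneg] with ω h1 h2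
      rw [Real.norm_eq_abs, abs_of_nonneg h2]; exact h1
    calc ∫ ω, Real.exp (t * ∑ k ∈ range (N+1), e k ω) ∂μ
        = ∫ ω, (f * g) ω ∂μ := by rw [hfg_eq]
      _ = ∫ ω, (μ[f * g | ℱ N]) ω ∂μ := (integral_condExp (ℱ.le N)).symm
      _ = ∫ ω, f ω * (μ[g | ℱ N]) ω ∂μ :=
          integral_congr_ae (condExp_mul_of_stronglyMeasurable_left hfmeasF hfg_int hg_int)
      _ ≤ ∫ ω, f ω * Real.cosh t ∂μ := by
          refine integral_mono_ae hint1 (hf_int.mul_const _) ?_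
          filter_upwards [hcondg_le] with ω h
          exact mul_le_mul_of_nonneg_left h (Real.exp_pos _).le
      _ = (∫ ω, f ω ∂μ) * Real.cosh t := integral_mul_const _ _
      _ ≤ Real.exp (N * t^2 / 2) * Real.exp (t^2 / 2) := by
          refine mul_le_mul ih (Real.cosh_le_exp_half_sq t) (Real.cosh_pos t).le
            (Real.exp_nonneg _)
      _ = Real.exp ((N+1 : ℕ) * t^2 / 2) := by
          rw [← Real.exp_add]; push_cast; ring_nf

lemma chernoff_aux {Ω : Type*} {m0 : MeasurableSpace Ω} (μ : Measure Ω)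
    [IsProbabilityMeasure μ] (ℱ : Filtration ℕ m0) (e : ℕ → Ω → ℝ)
    (hmeas : ∀ n, Measurable[ℱ (n+1)] (e n))
    (hbd : ∀ n, ∀ᵐ ω ∂μ, |e n ω| ≤ 1)
    (hcond : ∀ n, μ[e n | ℱ n] =ᵐ[μ] 0)
    (δ : ℝ) (hδ : 0 < δ) (N : ℕ) :
    (μ {ω | (N : ℝ) * δ ≤ ∑ k ∈ range N, e k ω}).toReal
      ≤ Real.exp (-((N : ℝ) * δ^2) / 2) := by
  have hmeas0 : ∀ n, Measurable (e n) := fun n => (hmeas n).mono (ℱ.le (n+1)) le_rfl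
  have hint : Integrable (fun ω => Real.exp (δ * ∑ k ∈ range N, e k ω)) μ :=
    integrable_exp_sum_aux μ δ N e hmeas0 hbd
  have hset : {ω | (N : ℝ) * δ ≤ ∑ k ∈ range N, e k ω}
      = {ω | Real.exp (δ * ((N : ℝ) * δ)) ≤ Real.exp (δ * ∑ k ∈ range N, e k ω)} := by
    ext ω
    simp only [Set.mem_setOf_eq, Real.exp_le_exp]
    exact (mul_le_mul_iff_right₀ hδ).symm
  have hmarkov := mul_meas_ge_le_integral_of_nonneg
    (ae_of_all μ fun ω => (Real.exp_pos (δ * ∑ k ∈ range N, e k ω)).le) hint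
    (Real.exp (δ * ((N : ℝ) * δ)))
  have hmgf := mgf_bound_aux μ ℱ e hmeas hbd hcond δ N
  rw [hset]
  have hpos : 0 < Real.exp (δ * ((N : ℝ) * δ)) := Real.exp_pos _
  have h1 : Real.exp (δ * ((N : ℝ) * δ)) *
      (μ {ω | Real.exp (δ * ((N : ℝ) * δ)) ≤ Real.exp (δ * ∑ k ∈ range N, e k ω)}).toReal
      ≤ Real.exp ((N : ℝ) * δ^2 / 2) := hmarkov.trans hmgf
  have h2 := (le_div_iff₀' hpos).2 h1
  refine h2.trans (le_of_eq ?_)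
  rw [← Real.exp_sub]
  ring_nf

/-- Robustness to proxy green sets: if the average conditional miss probability is
at most ε and the average conditional proxy probability is at most `(p_τ − ε) − δ`,
then the average conditional green probability is at most `p_τ − δ`, and hence the
detection probability is at most `exp(−Nδ²/2)`. -/
theorem stmt_6 {Ω V : Type*} {m0 : MeasurableSpace Ω} [MeasurableSpace V]
    (μ : Measure Ω) [IsProbabilityMeasure μ] (ℱ : Filtration ℕ m0)
    (N : ℕ) (hN : 0 < N)
    (Y : ℕ → Ω → V) (hY : ∀ n, Measurable[ℱ n] (Y n))
    (G Ghat : Set V) (hG : MeasurableSet G) (hGhat : MeasurableSet Ghat)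
    (ε δ pτ : ℝ) (hδ : 0 < δ)
    (hmiss : ∀ᵐ ω ∂μ,
      (1 / N : ℝ) * ∑ n ∈ Finset.Icc 1 N,
        (μ[fun ω' => (G \ Ghat).indicator (fun _ => (1:ℝ)) (Y n ω') | ℱ (n - 1)]) ω
        ≤ ε)
    (hproxy : ∀ᵐ ω ∂μ,
      (1 / N : ℝ) * ∑ n ∈ Finset.Icc 1 N,
        (μ[fun ω' => Ghat.indicator (fun _ => (1:ℝ)) (Y n ω') | ℱ (n - 1)]) ω
        ≤ (pτ - ε) - δ) :
    (∀ᵐ ω ∂μ,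
      (1 / N : ℝ) * ∑ n ∈ Finset.Icc 1 N,
        (μ[fun ω' => G.indicator (fun _ => (1:ℝ)) (Y n ω') | ℱ (n - 1)]) ω
        ≤ pτ - δ) ∧
    (μ {ω | pτ ≤ (1 / N : ℝ) * ∑ n ∈ Finset.Icc 1 N,
        G.indicator (fun _ => (1:ℝ)) (Y n ω)}).toReal
      ≤ Real.exp (-(N * δ ^ 2) / 2) := by
  have hNpos : (0:ℝ) < N := Nat.cast_pos.2 hN
  -- indicator helpers
  have hind01 : ∀ (T : Set V) (v : V),
      0 ≤ T.indicator (fun _ => (1:ℝ)) v ∧ T.indicator (fun _ => (1:ℝ)) v ≤ 1 := by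
    intro T v; by_cases h : v ∈ T <;> simp [h]
  set XG : ℕ → Ω → ℝ := fun n ω' => G.indicator (fun _ => (1:ℝ)) (Y n ω') with hXG
  set XH : ℕ → Ω → ℝ := fun n ω' => Ghat.indicator (fun _ => (1:ℝ)) (Y n ω') with hXH
  set XM : ℕ → Ω → ℝ := fun n ω' => (G \ Ghat).indicator (fun _ => (1:ℝ)) (Y n ω') with hXM
  have hmeasX : ∀ (T : Set V), MeasurableSet T → ∀ n,
      Measurable[ℱ n] (fun ω' => T.indicator (fun _ => (1:ℝ)) (Y n ω')) :=
    fun T hT n => (measurable_const.indicator hT).comp (hY n)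
  have hintX : ∀ (T : Set V), MeasurableSet T → ∀ n,
      Integrable (fun ω' => T.indicator (fun _ => (1:ℝ)) (Y n ω')) μ := by
    intro T hT n
    refine Integrable.mono' (integrable_const 1)
      (((hmeasX T hT n).mono (ℱ.le n) le_rfl).aestronglyMeasurable) ?_
    refine ae_of_all _ fun ω => ?_
    rw [Real.norm_eq_abs, abs_of_nonneg (hind01 T (Y n ω)).1]
    exact (hind01 T (Y n ω)).2
  -- Part 1
  have hptwise : ∀ v : V, G.indicator (fun _ => (1:ℝ)) v
      ≤ Ghat.indicator (fun _ => (1:ℝ)) v + (G \ Ghat).indicator (fun _ => (1:ℝ)) v := by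
    intro v
    by_cases hg : v ∈ G <;> by_cases hh : v ∈ Ghat <;>
      simp [Set.indicator_apply, Set.mem_diff, hg, hh]
  have hcmp : ∀ n, (μ[XG n | ℱ (n-1)]) ≤ᵐ[μ] (μ[XH n | ℱ (n-1)]) + (μ[XM n | ℱ (n-1)]) := by
    intro n
    have h1 : XG n ≤ᵐ[μ] XH n + XM n := ae_of_all _ fun ω => by
      simpa [Pi.add_apply] using hptwise (Y n ω)
    have h2 := condExp_mono (m := ℱ (n-1)) (hintX G hG n)
      ((hintX Ghat hGhat n).add (hintX _ (hG.diff hGhat) n)) h1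
    exact h2.trans (condExp_add (m := ℱ (n-1)) (hintX Ghat hGhat n) (hintX _ (hG.diff hGhat) n)).le
  have hall : ∀ᵐ ω ∂μ, ∀ n ∈ Finset.Icc 1 N,
      (μ[XG n | ℱ (n-1)]) ω ≤ (μ[XH n | ℱ (n-1)]) ω + (μ[XM n | ℱ (n-1)]) ω := by
    rw [Filter.eventually_all_finset]
    intro n _
    filter_upwards [hcmp n] with ω h using h
  have part1 : ∀ᵐ ω ∂μ,
      (1 / N : ℝ) * ∑ n ∈ Finset.Icc 1 N, (μ[XG n | ℱ (n-1)]) ω ≤ pτ - δ := by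
    filter_upwards [hall, hmiss, hproxy] with ω h1 h2 h3
    have hsum : ∑ n ∈ Finset.Icc 1 N, (μ[XG n | ℱ (n-1)]) ω
        ≤ ∑ n ∈ Finset.Icc 1 N, (μ[XH n | ℱ (n-1)]) ω
          + ∑ n ∈ Finset.Icc 1 N, (μ[XM n | ℱ (n-1)]) ω := by
      rw [← Finset.sum_add_distrib]
      exact Finset.sum_le_sum h1
    have h4 : (1 / N : ℝ) * ∑ n ∈ Finset.Icc 1 N, (μ[XG n | ℱ (n-1)]) ω
        ≤ (1 / N : ℝ) * (∑ n ∈ Finset.Icc 1 N, (μ[XH n | ℱ (n-1)]) ω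
          + ∑ n ∈ Finset.Icc 1 N, (μ[XM n | ℱ (n-1)]) ω) :=
      mul_le_mul_of_nonneg_left hsum (by positivity)
    rw [mul_add] at h4
    linarith
  refine ⟨part1, ?_⟩
  -- Part 2 : martingale differences
  set e : ℕ → Ω → ℝ := fun k ω => XG (k+1) ω - (μ[XG (k+1) | ℱ (k+1-1)]) ω with he
  have hidx : ∀ k : ℕ, k + 1 - 1 = k := fun k => rfl
  have hpmeas : ∀ k, StronglyMeasurable[ℱ k] (μ[XG (k+1) | ℱ (k+1-1)]) := by
    intro k; rw [hidx]; exact stronglyMeasurable_condExp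
  have hemeas : ∀ k, Measurable[ℱ (k+1)] (e k) := by
    intro k
    exact ((hmeasX G hG (k+1)).sub
      ((hpmeas k).mono (ℱ.mono k.le_succ)).measurable)
  have hp_nonneg : ∀ k, 0 ≤ᵐ[μ] μ[XG (k+1) | ℱ (k+1-1)] := fun k =>
    condExp_nonneg (ae_of_all _ fun ω => (hind01 G (Y (k+1) ω)).1)
  have hp_le_one : ∀ k, μ[XG (k+1) | ℱ (k+1-1)] ≤ᵐ[μ] fun _ => (1:ℝ) := by
    intro k
    have := condExp_mono (m := ℱ (k+1-1)) (hintX G hG (k+1)) (integrable_const 1)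
      (ae_of_all _ fun ω => (hind01 G (Y (k+1) ω)).2)
    rwa [condExp_const (ℱ.le _)] at this
  have hebd : ∀ k, ∀ᵐ ω ∂μ, |e k ω| ≤ 1 := by
    intro k
    filter_upwards [hp_nonneg k, hp_le_one k] with ω hω1 hω2
    have hω1' : (0:ℝ) ≤ (μ[XG (k+1) | ℱ (k+1-1)]) ω := hω1
    have hω2' : (μ[XG (k+1) | ℱ (k+1-1)]) ω ≤ 1 := hω2
    have hx1 := (hind01 G (Y (k+1) ω)).1
    have hx2 := (hind01 G (Y (k+1) ω)).2
    rw [abs_le]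
    constructor <;> simp only [he] <;> linarith
  have hecond : ∀ k, μ[e k | ℱ k] =ᵐ[μ] 0 := by
    intro k
    have hpint : Integrable (μ[XG (k+1) | ℱ (k+1-1)]) μ := integrable_condExp
    have h1 := condExp_sub (m := ℱ k) (hintX G hG (k+1)) hpint
    have h2 : μ[(μ[XG (k+1) | ℱ (k+1-1)]) | ℱ k] = μ[XG (k+1) | ℱ (k+1-1)] :=
      condExp_of_stronglyMeasurable (ℱ.le k) (hpmeas k) hpint
    refine h1.trans ?_
    rw [h2, hidx]
    filter_upwards with ω
    exact sub_self _
  have hchern := chernoff_aux μ ℱ e hemeas hebd hecond δ hδ N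
  -- relate the two events
  have hicc : ∀ (F : ℕ → Ω → ℝ) (ω : Ω),
      ∑ n ∈ Finset.Icc 1 N, F n ω = ∑ k ∈ range N, F (k+1) ω := by
    intro F ω
    rw [← Finset.Ico_add_one_right_eq_Icc, Finset.sum_Ico_eq_sum_range]
    refine Finset.sum_congr (by norm_num) fun i _ => by rw [Nat.add_comm]
  have hsub : {ω | pτ ≤ (1 / N : ℝ) * ∑ n ∈ Finset.Icc 1 N,
        G.indicator (fun _ => (1:ℝ)) (Y n ω)}
      ≤ᵐ[μ] {ω | (N : ℝ) * δ ≤ ∑ k ∈ range N, e k ω} := by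
    filter_upwards [part1] with ω hω hA
    have hA' : pτ ≤ (1 / N : ℝ) * ∑ n ∈ Finset.Icc 1 N, XG n ω := hA
    show (N : ℝ) * δ ≤ ∑ k ∈ range N, e k ω
    have hre : ∑ k ∈ range N, e k ω
        = ∑ n ∈ Finset.Icc 1 N, XG n ω
          - ∑ n ∈ Finset.Icc 1 N, (μ[XG n | ℱ (n-1)]) ω := by
      rw [Finset.sum_sub_distrib, hicc XG ω, hicc (fun n => μ[XG n | ℱ (n-1)]) ω]
    have hNinv : (N:ℝ) * (1/N) = 1 := by field_simp
    have ha : (N:ℝ) * pτ ≤ ∑ n ∈ Finset.Icc 1 N, XG n ω := by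
      have := mul_le_mul_of_nonneg_left hA' hNpos.le
      rwa [← mul_assoc, hNinv, one_mul] at this
    have hb : ∑ n ∈ Finset.Icc 1 N, (μ[XG n | ℱ (n-1)]) ω ≤ (N:ℝ) * (pτ - δ) := by
      have := mul_le_mul_of_nonneg_left hω hNpos.le
      rwa [← mul_assoc, hNinv, one_mul] at this
    have hexp : (N:ℝ) * (pτ - δ) = N * pτ - N * δ := by ring
    rw [hre]
    linarith
  calc (μ {ω | pτ ≤ (1 / N : ℝ) * ∑ n ∈ Finset.Icc 1 N,
        G.indicator (fun _ => (1:ℝ)) (Y n ω)}).toReal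
      ≤ (μ {ω | (N : ℝ) * δ ≤ ∑ k ∈ range N, e k ω}).toReal :=
        ENNReal.toReal_mono (measure_ne_top μ _) (measure_mono_ae hsub)
    _ ≤ Real.exp (-((N : ℝ) * δ^2) / 2) := hchern
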